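/- If α is an irrational number not equivalent to the golden ratio (1+√5)/2, then 𝔨(α) ≤ 4/√17. -/

import Mathlib

open Filter

/-- The tails `αₙ = [aₙ; aₙ₊₁, …]` of the continued fraction of `α`. -/
noncomputable def cfTail (α : ℝ) : ℕ → ℝ
  | 0 => α
  | n + 1 => (Int.fract (cfTail α n))⁻¹

/-- The partial quotients `aₙ` of the continued fraction of `α`. -/
noncomputable def cfDigit (α : ℝ) (n : ℕ) : ℤ := ⌊cfTail α n⌋

/-- Value `[a; b, c, …]` of a finite continued fraction given by a list. -/
noncomputable def finCF : List ℤ → ℝ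
  | [] => 0
  | a :: l => (a : ℝ) + (finCF l)⁻¹

/-- `α*ₙ = [0; aₙ, aₙ₋₁, …, a₁]`. -/
noncomputable def cfStar (α : ℝ) (n : ℕ) : ℝ :=
  (finCF (((List.range' 1 n).reverse).map (cfDigit α)))⁻¹

/-- Numerators `pₙ` of the convergents of `α`. -/
noncomputable def cfNum (α : ℝ) : ℕ → ℤ
  | 0 => cfDigit α 0
  | 1 => cfDigit α 1 * cfDigit α 0 + 1
  | n + 2 => cfDigit α (n + 2) * cfNum α (n + 1) + cfNum α n

/-- Denominators `qₙ` of the convergents of `α`. -/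
noncomputable def cfDen (α : ℝ) : ℕ → ℤ
  | 0 => 1
  | 1 => cfDigit α 1
  | n + 2 => cfDigit α (n + 2) * cfDen α (n + 1) + cfDen α n

/-- The irrationality measure function `ψ_α^[2]` for "second best" approximations. -/
noncomputable def psi2 (α : ℝ) (t : ℝ) : ℝ :=
  sInf { x : ℝ | ∃ p q : ℤ, 1 ≤ q ∧ (q : ℝ) ≤ t ∧
    (∀ n : ℕ, (p, q) ≠ (cfNum α n, cfDen α n)) ∧ x = |(q : ℝ) * α - (p : ℝ)| }

/-- The Diophantine constant `𝔨(α) = liminf_{t → ∞} t · ψ_α^[2](t)`. -/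
noncomputable def kConst (α : ℝ) : ℝ := liminf (fun t : ℝ => t * psi2 α t) atTop

/-- Two numbers are equivalent if the tails of their continued fraction expansions
coincide: `a_{n+k} = b_{m+k}` for all `k ≥ 1`, for some positive integers `m`, `n`. -/
def CFEquiv (α β : ℝ) : Prop :=
  ∃ n m : ℕ, 0 < n ∧ 0 < m ∧ ∀ k : ℕ, 0 < k → cfDigit α (n + k) = cfDigit β (m + k)

/-- The spectrum `𝕃₂` of values of `𝔨`. -/
def L2 : Set ℝ := { l : ℝ | ∃ α : ℝ, Irrational α ∧ l = kConst α }

/-- `κ¹ₙ(α) = (1 + α*ₙ₋₁)(αₙ − 1)/(αₙ + α*ₙ₋₁)`. -/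
noncomputable def kappa1 (α : ℝ) (n : ℕ) : ℝ :=
  (1 + cfStar α (n - 1)) * (cfTail α n - 1) / (cfTail α n + cfStar α (n - 1))

/-- `κ²ₙ(α) = (1 − α*ₙ)(αₙ₊₁ + 1)/(αₙ₊₁ + α*ₙ)`. -/
noncomputable def kappa2 (α : ℝ) (n : ℕ) : ℝ :=
  (1 - cfStar α n) * (cfTail α (n + 1) + 1) / (cfTail α (n + 1) + cfStar α n)

/-- `κ⁴ₙ(α) = 4/(αₙ + α*ₙ₋₁)`. -/
noncomputable def kappa4 (α : ℝ) (n : ℕ) : ℝ :=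
  4 / (cfTail α n + cfStar α (n - 1))

/-!
For infinitely many `k` the partial quotient `a = a_{k+3}` is at least `2`, since the expansion
of `α` does not end in ones. Three integer points near `α` are then not convergents: the doubled
convergent `2(p_{k+2}, q_{k+2})`, the mediant `(p_{k+1} + p_{k+2}, q_{k+1} + q_{k+2})` and
`(p_{k+3} - p_{k+2}, q_{k+3} - q_{k+2})`, whose denominators lie strictly between `q_{k+2}` and
`q_{k+3}`. Because `q_{k+1} α - p_{k+1} = -α_{k+3} (q_{k+2} α - p_{k+2})`, the quantities
`q |q α - p|` of all three are explicit in `q_{k+1}`, `q_{k+2}`, `a` and `v = 1/α_{k+4}`, and an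
elementary inequality shows that one of them is at most `4/√17`, unless `a = 2` and
`α_{k+4} < 1 + 1/√17`. In that case `a_{k+4} = 1` and `α_{k+5} > √17`, so the doubled convergent
`2(p_{k+4}, q_{k+4})` does the job. Hence `t ψ_α^[2](t) ≤ 4/√17` for arbitrarily large `t`.
-/

section ContinuedFraction

variable {α : ℝ}

lemma irrational_cfTail (hα : Irrational α) : ∀ n, Irrational (cfTail α n)
  | 0 => hα
  | n + 1 => by
    rw [cfTail, Int.fract]
    exact ((irrational_cfTail hα n).sub_intCast _).inv

lemma one_lt_cfTail_succ (hα : Irrational α) (n : ℕ) : 1 < cfTail α (n + 1) := by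
  have hpos : 0 < Int.fract (cfTail α n) :=
    Int.fract_pos.2 fun h ↦ (irrational_cfTail hα n).ne_int _ h
  exact one_lt_inv_iff₀.2 ⟨hpos, Int.fract_lt_one _⟩

lemma cfTail_eq_cfDigit_add_inv (n : ℕ) :
    cfTail α n = cfDigit α n + (cfTail α (n + 1))⁻¹ := by
  rw [cfDigit, cfTail, inv_inv, Int.fract]
  ring

lemma cfTail_sub_cfDigit_mul_cfTail_succ (hα : Irrational α) (n : ℕ) :
    (cfTail α n - cfDigit α n) * cfTail α (n + 1) = 1 := by
  rw [cfDigit, ← Int.fract, cfTail]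
  exact mul_inv_cancel₀ (Int.fract_pos.2 fun h ↦ (irrational_cfTail hα n).ne_int _ h).ne'

lemma one_le_cfDigit_succ (hα : Irrational α) (n : ℕ) : 1 ≤ cfDigit α (n + 1) :=
  Int.le_floor.2 (by exact_mod_cast (one_lt_cfTail_succ hα n).le)

lemma one_le_cfDen (hα : Irrational α) (n : ℕ) : 1 ≤ cfDen α n := by
  induction n using Nat.twoStepInduction with
  | zero => exact le_rfl
  | one => exact one_le_cfDigit_succ hα 0
  | more n ih₀ ih₁ =>
    rw [cfDen]
    nlinarith [one_le_cfDigit_succ hα (n + 1)]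

lemma cfDen_succ_add_one_le (hα : Irrational α) (n : ℕ) :
    cfDen α (n + 1) + 1 ≤ cfDen α (n + 2) := by
  rw [cfDen]
  nlinarith [one_le_cfDigit_succ hα (n + 1), one_le_cfDen hα n, one_le_cfDen hα (n + 1)]

lemma cfDen_mono (hα : Irrational α) : Monotone (cfDen α) := by
  refine monotone_nat_of_le_succ fun n ↦ ?_
  cases n with
  | zero => exact one_le_cfDigit_succ hα 0
  | succ n => linarith [cfDen_succ_add_one_le hα n]

lemma le_cfDen_succ (hα : Irrational α) (n : ℕ) : (n : ℤ) ≤ cfDen α (n + 1) := by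
  induction n with
  | zero => exact zero_le_one.trans (one_le_cfDen hα 1)
  | succ n ih => push_cast; linarith [cfDen_succ_add_one_le hα n]

lemma cfDen_mul_cfNum_sub (n : ℕ) :
    cfDen α (n + 1) * cfNum α n - cfNum α (n + 1) * cfDen α n = (-1) ^ (n + 1) := by
  induction n with
  | zero => simp only [cfDen, cfNum]; ring
  | succ n ih => rw [cfDen, cfNum, pow_succ, ← ih]; ring

noncomputable def cfErr (α : ℝ) (n : ℕ) : ℝ := cfDen α n * α - cfNum α n

lemma cfErr_add_two (n : ℕ) :
    cfErr α (n + 2) = cfDigit α (n + 2) * cfErr α (n + 1) + cfErr α n := by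
  simp only [cfErr, cfDen, cfNum]
  push_cast
  ring

lemma cfErr_add_cfErr_succ_mul_cfTail (hα : Irrational α) (n : ℕ) :
    cfErr α n + cfErr α (n + 1) * cfTail α (n + 2) = 0 := by
  induction n with
  | zero =>
    have h0 : (α - cfDigit α 0) * cfTail α 1 = 1 := cfTail_sub_cfDigit_mul_cfTail_succ hα 0
    have h1 : (cfTail α 1 - cfDigit α 1) * cfTail α 2 = 1 :=
      cfTail_sub_cfDigit_mul_cfTail_succ hα 1
    simp only [cfErr, cfDen, cfNum]
    push_cast
    linear_combination cfTail α 2 * h0 - (α - cfDigit α 0) * h1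
  | succ n ih =>
    have h : (cfTail α (n + 2) - cfDigit α (n + 2)) * cfTail α (n + 1 + 2) = 1 :=
      cfTail_sub_cfDigit_mul_cfTail_succ hα (n + 2)
    rw [cfErr_add_two]
    linear_combination cfTail α (n + 1 + 2) * ih - cfErr α (n + 1) * h

lemma cfErr_succ_mul (hα : Irrational α) (n : ℕ) :
    cfErr α (n + 1) * (cfDen α (n + 1) * cfTail α (n + 2) + cfDen α n) = (-1) ^ (n + 1) := by
  have hdet : (cfDen α (n + 1) * cfNum α n - cfNum α (n + 1) * cfDen α n : ℝ) = (-1) ^ (n + 1) :=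
    mod_cast cfDen_mul_cfNum_sub n
  have h := cfErr_add_cfErr_succ_mul_cfTail hα n
  simp only [cfErr] at h ⊢
  linear_combination cfDen α (n + 1) * h + hdet

lemma abs_cfErr_succ_mul (hα : Irrational α) (n : ℕ) :
    |cfErr α (n + 1)| * (cfDen α (n + 1) * cfTail α (n + 2) + cfDen α n) = 1 := by
  have hpos : (0 : ℝ) < cfDen α (n + 1) * cfTail α (n + 2) + cfDen α n := by
    have := one_lt_cfTail_succ hα (n + 1)
    have h0 : (1 : ℝ) ≤ cfDen α n := mod_cast one_le_cfDen hα n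
    have h1 : (1 : ℝ) ≤ cfDen α (n + 1) := mod_cast one_le_cfDen hα (n + 1)
    nlinarith
  rw [← abs_of_pos hpos, ← abs_mul, cfErr_succ_mul hα, abs_pow, abs_neg, abs_one, one_pow]

lemma abs_cfErr_add_cfErr_succ (hα : Irrational α) (n : ℕ) :
    |cfErr α n + cfErr α (n + 1)| = |cfErr α (n + 1)| * (cfTail α (n + 2) - 1) := by
  have h := cfErr_add_cfErr_succ_mul_cfTail hα n
  rw [show cfErr α n + cfErr α (n + 1) = -(cfErr α (n + 1) * (cfTail α (n + 2) - 1)) by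
    linear_combination h, abs_neg, abs_mul,
    abs_of_pos (sub_pos.2 (one_lt_cfTail_succ hα (n + 1)))]

lemma abs_cfErr_succ_sub_cfErr (hα : Irrational α) (n : ℕ) :
    |cfErr α (n + 1) - cfErr α n| = |cfErr α n| * (1 + (cfTail α (n + 2))⁻¹) := by
  have hpos : 0 < cfTail α (n + 2) := zero_lt_one.trans (one_lt_cfTail_succ hα (n + 1))
  have h := cfErr_add_cfErr_succ_mul_cfTail hα n
  rw [show cfErr α (n + 1) - cfErr α n = -(cfErr α n * (1 + (cfTail α (n + 2))⁻¹)) by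
    field_simp; linear_combination h, abs_neg, abs_mul,
    abs_of_pos (a := 1 + _) (by positivity)]

noncomputable def approxQuality (α : ℝ) (p q : ℤ) : ℝ := q * |q * α - p|

lemma approxQuality_two_mul (n : ℕ) :
    approxQuality α (2 * cfNum α n) (2 * cfDen α n) = 4 * cfDen α n * |cfErr α n| := by
  rw [approxQuality, show ((2 * cfDen α n : ℤ) : ℝ) * α - (2 * cfNum α n : ℤ) = 2 * cfErr α n by
    rw [cfErr]; push_cast; ring, abs_mul, abs_two]
  push_cast
  ring

lemma approxQuality_add (hα : Irrational α) (n : ℕ) :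
    approxQuality α (cfNum α n + cfNum α (n + 1)) (cfDen α n + cfDen α (n + 1)) =
      (cfDen α n + cfDen α (n + 1)) * (cfTail α (n + 2) - 1) * |cfErr α (n + 1)| := by
  rw [approxQuality, show ((cfDen α n + cfDen α (n + 1) : ℤ) : ℝ) * α -
      (cfNum α n + cfNum α (n + 1) : ℤ) = cfErr α n + cfErr α (n + 1) by
    simp only [cfErr]; push_cast; ring, abs_cfErr_add_cfErr_succ hα]
  push_cast
  ring

lemma approxQuality_sub (hα : Irrational α) (n : ℕ) :
    approxQuality α (cfNum α (n + 1) - cfNum α n) (cfDen α (n + 1) - cfDen α n) =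
      (cfDen α (n + 1) - cfDen α n) * (1 + (cfTail α (n + 2))⁻¹) * |cfErr α n| := by
  rw [approxQuality, show ((cfDen α (n + 1) - cfDen α n : ℤ) : ℝ) * α -
      (cfNum α (n + 1) - cfNum α n : ℤ) = cfErr α (n + 1) - cfErr α n by
    simp only [cfErr]; push_cast; ring, abs_cfErr_succ_sub_cfErr hα]
  push_cast
  ring

lemma two_mul_ne_cfNum_cfDen (k m : ℕ) :
    (2 * cfNum α k, 2 * cfDen α k) ≠ (cfNum α m, cfDen α m) := by
  intro h
  obtain ⟨hp, hq⟩ := Prod.mk.inj h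
  have hdet := cfDen_mul_cfNum_sub (α := α) m
  rw [← hp, ← hq] at hdet
  have h2 : (2 : ℤ) ∣ (-1) ^ (m + 1) :=
    ⟨cfDen α (m + 1) * cfNum α k - cfNum α (m + 1) * cfDen α k, by linear_combination -hdet⟩
  rcases neg_one_pow_eq_or ℤ (m + 1) with h1 | h1 <;> rw [h1] at h2 <;> norm_num at h2

lemma ne_cfNum_cfDen_of_lt_of_lt (hα : Irrational α) {p q : ℤ} {j : ℕ}
    (h1 : cfDen α j < q) (h2 : q < cfDen α (j + 1)) (m : ℕ) :
    (p, q) ≠ (cfNum α m, cfDen α m) := by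
  intro h
  obtain ⟨-, rfl⟩ := Prod.mk.inj h
  rcases le_or_gt m j with hm | hm
  · exact (cfDen_mono hα hm).not_gt h1
  · exact (cfDen_mono hα (Nat.succ_le_of_lt hm)).not_gt h2

end ContinuedFraction

lemma psi2_nonneg (α t : ℝ) : 0 ≤ psi2 α t :=
  Real.sInf_nonneg fun _ ⟨_, _, _, _, _, hx⟩ ↦ hx ▸ abs_nonneg _

lemma psi2_le {α t : ℝ} {p q : ℤ} (hq : 1 ≤ q) (hqt : (q : ℝ) ≤ t)
    (hne : ∀ n, (p, q) ≠ (cfNum α n, cfDen α n)) : psi2 α t ≤ |q * α - p| :=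
  csInf_le ⟨0, fun _ ⟨_, _, _, _, _, hx⟩ ↦ hx ▸ abs_nonneg _⟩ ⟨p, q, hq, hqt, hne, rfl⟩

section GoldenRatio

open Real
open scoped goldenRatio

lemma floor_goldenRatio : ⌊φ⌋ = 1 :=
  Int.floor_eq_iff.2 ⟨by simpa using one_lt_goldenRatio.le, by norm_num [goldenRatio_lt_two]⟩

lemma cfTail_goldenRatio (n : ℕ) : cfTail φ n = φ := by
  induction n with
  | zero => rfl
  | succ n ih =>
    have hfract : φ - 1 = φ⁻¹ := by linarith [inv_goldenRatio, goldenRatio_add_goldenConj]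
    rw [cfTail, ih, Int.fract, floor_goldenRatio, Int.cast_one, hfract, inv_inv]

lemma cfDigit_goldenRatio (n : ℕ) : cfDigit φ n = 1 := by
  rw [cfDigit, cfTail_goldenRatio, floor_goldenRatio]

lemma exists_two_le_cfDigit {α : ℝ} (hα : Irrational α) (h : ¬ CFEquiv α φ) (N : ℕ) :
    ∃ k, N ≤ k ∧ 2 ≤ cfDigit α (k + 3) := by
  simp only [CFEquiv, not_exists, not_and, not_forall] at h
  obtain ⟨j, hj, hne⟩ := h (N + 2) 1 (by omega) one_pos
  rw [cfDigit_goldenRatio] at hne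
  refine ⟨N + j - 1, by omega, ?_⟩
  have h1 := one_le_cfDigit_succ hα (N + 1 + j)
  rw [show N + j - 1 + 3 = N + 2 + j by omega]
  rw [show N + 1 + j + 1 = N + 2 + j by omega] at h1
  omega

end GoldenRatio

/-- With `q0 = q_{k+1}`, `q1 = q_{k+2}`, `a = a_{k+3}` and `v = 1/α_{k+4}`, the right-hand sides
are `4/|q_{k+2} α - p_{k+2}|`, and the disjuncts say that the doubled convergent, the mediant and
the difference approximation of `exists_nonconvergent_approx` reach `4/√17`. -/
lemma sqrt17_three_candidates {a : ℤ} {q0 q1 v : ℝ} (ha : 2 ≤ a) (hq0 : 1 ≤ q0)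
    (hq01 : q0 + 1 ≤ q1) (hv0 : 0 < v) (hv : v ≤ √17 * (1 - v)) :
    √17 * (4 * q1) ≤ 4 * (q1 * (a + v) + q0) ∨
      √17 * ((q0 + q1) * (a + v - 1)) ≤ 4 * (q1 * (a + v) + q0) ∨
      √17 * (((a - 1) * q1 + q0) * (1 + v)) ≤ 4 * (q1 * (a + v) + q0) := by
  set s := √17
  have hs : s ^ 2 = 17 := Real.sq_sqrt (by norm_num)
  have hs4 : 4 < s := by rw [Real.lt_sqrt (by norm_num)]; norm_num
  by_contra! h
  obtain ⟨H1, H2, H3⟩ := h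
  have hs0 : 0 < s := by linarith
  rcases (show a = 2 ∨ 3 ≤ a by omega) with rfl | ha3
  · push_cast at H1 H2 H3
    have h10 : 0 ≤ q1 - 1 - q0 := by linarith
    nlinarith [mul_nonneg hv0.le h10, mul_nonneg (sub_nonneg.2 hv)
      (by nlinarith : (0:ℝ) ≤ q1 * (4*s - 8) - 2*s), mul_pos hv0 (by linarith : (0:ℝ) < q1)]
  · -- With `B = q1 a + W`, the failure of the first candidate gives `s (B² - q1²) ≤ 16 q1 B`
    -- (using `s² = 17`), while the other two failures and `4 q1 q0 v ≤ W²` give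
    -- `16 q1 B < s (B² - q1²) - s q1² (a - 1)(a - 3)`, impossible for `a ≥ 3`.
    replace ha3 : (3 : ℝ) ≤ a := mod_cast ha3
    have hq1pos : 0 < q1 := by linarith
    set W := q0 + q1 * v
    set B := q1 * (a + v) + q0
    have hB : B = q1 * a + W := by ring
    have hfirst : s * (B ^ 2 - q1 ^ 2) ≤ 16 * q1 * B := by
      have h := mul_nonneg (by linarith : 0 ≤ s * q1 - B) (by positivity : 0 ≤ s * B + q1)
      have h17 : s ^ 2 * (q1 * B) = 17 * (q1 * B) := by rw [hs]
      nlinarith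
    have hAM : 4 * q1 * q0 * v ≤ W ^ 2 := by nlinarith [sq_nonneg (q0 - q1 * v)]
    have hsum : 8 * B < s * (2 * q1 * (a - 1) + a * W + 2 * q0 * v) := by linarith
    have hrest : 16 * q1 * B < s * (B ^ 2 - q1 ^ 2) - s * q1 ^ 2 * ((a - 1) * (a - 3)) := by
      have h := mul_lt_mul_of_pos_left hsum (by positivity : 0 < 2 * q1)
      have := mul_le_mul_of_nonneg_left hAM hs0.le
      rw [hB]
      nlinarith
    have ha13 : 0 ≤ ((a : ℝ) - 1) * (a - 3) := by nlinarith
    nlinarith [mul_nonneg (mul_nonneg hs0.le (sq_nonneg q1)) ha13]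

lemma mul_le_div_of_mul_eq_one {X e B c d : ℝ} (hc : 0 < c) (he : 0 ≤ e) (heB : e * B = 1)
    (h : c * X ≤ d * B) : X * e ≤ d / c := by
  rw [le_div_iff₀ hc]
  calc X * e * c = c * X * e := by ring
    _ ≤ d * B * e := mul_le_mul_of_nonneg_right h he
    _ = d := by rw [mul_assoc, mul_comm B, heB, mul_one]

section Candidates

variable {α : ℝ}

lemma exists_two_mul_convergent_approx (hα : Irrational α) (n : ℕ)
    (h : √17 * cfDen α (n + 1) ≤ cfDen α (n + 1) * cfTail α (n + 2) + cfDen α n) :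
    ∃ p q : ℤ, cfDen α (n + 1) ≤ q ∧ (∀ m, (p, q) ≠ (cfNum α m, cfDen α m)) ∧
      approxQuality α p q ≤ 4 / √17 := by
  refine ⟨2 * cfNum α (n + 1), 2 * cfDen α (n + 1), by linarith [one_le_cfDen hα (n + 1)],
    two_mul_ne_cfNum_cfDen _, ?_⟩
  rw [approxQuality_two_mul]
  exact mul_le_div_of_mul_eq_one (by positivity) (abs_nonneg _) (abs_cfErr_succ_mul hα n)
    (by linarith)

lemma sqrt17_lt_cfTail_add_two (hα : Irrational α) (n : ℕ)
    (h : √17 * (1 - (cfTail α (n + 1))⁻¹) < (cfTail α (n + 1))⁻¹) :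
    √17 < cfTail α (n + 2) := by
  set y := cfTail α (n + 1)
  have hy1 : 1 < y := one_lt_cfTail_succ hα n
  have hsy : √17 * (y - 1) < 1 := by
    have := mul_lt_mul_of_pos_right h (zero_lt_one.trans hy1)
    rwa [mul_assoc, sub_mul, one_mul, inv_mul_cancel₀ (by positivity)] at this
  have hs1 : 1 < √17 := by rw [Real.lt_sqrt zero_le_one]; norm_num
  have hdigit : cfDigit α (n + 1) = 1 :=
    Int.floor_eq_iff.2 ⟨by push_cast; linarith, by push_cast; nlinarith⟩
  have hstep := cfTail_sub_cfDigit_mul_cfTail_succ hα (n + 1)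
  rw [hdigit, Int.cast_one] at hstep
  nlinarith

lemma exists_nonconvergent_approx (hα : Irrational α) (k : ℕ) (ha : 2 ≤ cfDigit α (k + 3)) :
    ∃ p q : ℤ, cfDen α (k + 2) ≤ q ∧ (∀ m, (p, q) ≠ (cfNum α m, cfDen α m)) ∧
      approxQuality α p q ≤ 4 / √17 := by
  set a := cfDigit α (k + 3)
  set v := (cfTail α (k + 4))⁻¹
  have hx : cfTail α (k + 3) = a + v := cfTail_eq_cfDigit_add_inv (k + 3)
  have he : |cfErr α (k + 2)| * (cfDen α (k + 2) * (a + v) + cfDen α (k + 1)) = 1 := by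
    rw [← hx]; exact abs_cfErr_succ_mul hα (k + 1)
  by_cases hesc : √17 * (1 - v) < v
  · have hlt := sqrt17_lt_cfTail_add_two hα (k + 3) hesc
    have h4 : (1 : ℝ) ≤ cfDen α (k + 4) := mod_cast one_le_cfDen hα (k + 4)
    have h3 : (1 : ℝ) ≤ cfDen α (k + 3) := mod_cast one_le_cfDen hα (k + 3)
    obtain ⟨p, q, hq, hne, hle⟩ := exists_two_mul_convergent_approx hα (k + 3) (by nlinarith)
    exact ⟨p, q, (cfDen_mono hα (by omega)).trans hq, hne, hle⟩
  have hq0 : 1 ≤ cfDen α (k + 1) := one_le_cfDen hα (k + 1)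
  have hq01 : cfDen α (k + 1) + 1 ≤ cfDen α (k + 2) := cfDen_succ_add_one_le hα k
  have hv0 : 0 < v := inv_pos.2 (zero_lt_one.trans (one_lt_cfTail_succ hα (k + 3)))
  have hq3 : cfDen α (k + 3) = a * cfDen α (k + 2) + cfDen α (k + 1) := rfl
  have hq3' : cfDen α (k + 2 + 1) = cfDen α (k + 3) := rfl
  have hmul : 2 * cfDen α (k + 2) ≤ a * cfDen α (k + 2) := by nlinarith
  rcases sqrt17_three_candidates ha (q0 := cfDen α (k + 1)) (q1 := cfDen α (k + 2))
    (mod_cast hq0) (mod_cast hq01) hv0 (not_lt.1 hesc) with h1 | h2 | h3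
  · exact exists_two_mul_convergent_approx hα (k + 1) (by rw [hx]; linarith)
  · refine ⟨cfNum α (k + 1) + cfNum α (k + 2), cfDen α (k + 1) + cfDen α (k + 2), by omega,
      ne_cfNum_cfDen_of_lt_of_lt hα (j := k + 2) (by omega) (by omega), ?_⟩
    rw [approxQuality_add hα, hx]
    exact mul_le_div_of_mul_eq_one (by positivity) (abs_nonneg _) he h2
  · refine ⟨cfNum α (k + 3) - cfNum α (k + 2), cfDen α (k + 3) - cfDen α (k + 2), by omega,
      ne_cfNum_cfDen_of_lt_of_lt hα (j := k + 2) (by omega) (by omega), ?_⟩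
    rw [approxQuality_sub hα, hq3]
    exact mul_le_div_of_mul_eq_one (by positivity) (abs_nonneg _) he (by push_cast; linarith)

end Candidates

/-- If `α` is irrational and not equivalent to the golden ratio, then `𝔨(α) ≤ 4/√17`. -/
theorem stmt_1 (α : ℝ) (hα : Irrational α)
    (h : ¬ CFEquiv α ((1 + Real.sqrt 5) / 2)) :
    kConst α ≤ 4 / Real.sqrt 17 := by
  have hbdd : IsBoundedUnder (· ≥ ·) atTop (fun t ↦ t * psi2 α t) :=
    ⟨0, eventually_map.2 <| (eventually_ge_atTop 0).mono fun t ht ↦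
      mul_nonneg ht (psi2_nonneg α t)⟩
  refine liminf_le_of_frequently_le (frequently_atTop.2 fun b ↦ ?_) hbdd
  obtain ⟨N, hN⟩ := exists_nat_ge b
  obtain ⟨k, hNk, hdigit⟩ := exists_two_le_cfDigit hα h N
  obtain ⟨p, q, hq, hne, hle⟩ := exists_nonconvergent_approx hα k hdigit
  have hk : ((k + 1 : ℕ) : ℤ) ≤ cfDen α (k + 2) := le_cfDen_succ hα (k + 1)
  have hNq : (N : ℤ) ≤ q := by omega
  have hq1 : 1 ≤ q := by omega
  refine ⟨q, hN.trans (mod_cast hNq), ?_⟩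
  calc (q : ℝ) * psi2 α q ≤ q * |q * α - p| :=
        mul_le_mul_of_nonneg_left (psi2_le hq1 le_rfl hne) (by positivity)
    _ ≤ 4 / √17 := hle
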